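/- Let A be a commutative MVW-rig with unitary element. Then Spec(A), the set of prime ideals of A equipped with the co-Zariski topology generated by the base { V(a) : a ∈ A } where V(a) = { P ∈ Spec(A) : a ∈ P }, is a compact topological space. -/

import Mathlib

/-- An MV-algebra `(A, ⊕, ¬, 0)`. -/
class MValg (A : Type*) where
  add : A → A → A
  neg : A → A
  zero : A
  add_assoc : ∀ x y z : A, add x (add y z) = add (add x y) z
  add_comm : ∀ x y : A, add x y = add y x
  add_zero : ∀ x : A, add x zero = x
  add_neg_zero : ∀ x : A, add x (neg zero) = neg zero
  neg_neg : ∀ x : A, neg (neg x) = x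
  mv6 : ∀ x y : A, add (neg (add (neg x) y)) y = add (neg (add (neg y) x)) x

namespace MValg

variable {A : Type*} [MValg A]

/-- Truncated difference `x ⊖ y = ¬(¬x ⊕ y)`. -/
def sub (x y : A) : A := neg (add (neg x) y)

/-- The natural MV-order: `x ≤ y` iff `x ⊖ y = 0`. -/
def le (x y : A) : Prop := sub x y = zero

/-- Join: `x ∨ y = (x ⊖ y) ⊕ y`. -/
def sup (x y : A) : A := add (sub x y) y

/-- Meet: `x ∧ y = ¬(¬x ∨ ¬y)`. -/
def inf (x y : A) : A := neg (sup (neg x) (neg y))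

end MValg

/-- An MVW-rig: an MV-algebra with an associative product interacting with ⊕ and ⊖. -/
class MVWrig (A : Type*) extends MValg A where
  mul : A → A → A
  mul_assoc : ∀ a b c : A, mul (mul a b) c = mul a (mul b c)
  mul_zero : ∀ a : A, mul a zero = zero
  zero_mul : ∀ a : A, mul zero a = zero
  mul_add_le : ∀ a b c : A, MValg.le (mul a (MValg.add b c)) (MValg.add (mul a b) (mul a c))
  add_mul_le : ∀ a b c : A, MValg.le (mul (MValg.add b c) a) (MValg.add (mul b a) (mul c a))
  mul_sub_ge : ∀ a b c : A, MValg.le (MValg.sub (mul a b) (mul a c)) (mul a (MValg.sub b c))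
  sub_mul_ge : ∀ a b c : A, MValg.le (MValg.sub (mul b a) (mul c a)) (mul (MValg.sub b c) a)

namespace MVWrig

variable {A : Type*} [MVWrig A]

/-- `pow a n` is the `(n+1)`-fold product `a^(n+1) = a·a⋯a`; exponents `n : ℕ` here
correspond exactly to the exponents `n + 1 ≥ 1` ("n-fold products") of the paper. -/
def pow (a : A) : ℕ → A
  | 0 => a
  | n + 1 => mul (pow a n) a

/-- Ideals of an MVW-rig: contain 0, downward closed, closed under ⊕,
and absorbing for the product on both sides. -/
def IsIdeal (I : Set A) : Prop :=
  MValg.zero ∈ I ∧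
  (∀ a b : A, MValg.le a b → b ∈ I → a ∈ I) ∧
  (∀ a b : A, a ∈ I → b ∈ I → MValg.add a b ∈ I) ∧
  (∀ a b : A, a ∈ I → mul a b ∈ I ∧ mul b a ∈ I)

/-- Prime ideals: `ab ∈ P` implies `a ∈ P` or `b ∈ P`. -/
def IsPrimeIdeal (P : Set A) : Prop :=
  IsIdeal P ∧ ∀ a b : A, mul a b ∈ P → a ∈ P ∨ b ∈ P

/-- The ideal generated by a set: the smallest ideal containing it
(the intersection of all ideals containing it). -/
def genIdeal (S : Set A) : Set A := ⋂₀ {I : Set A | IsIdeal I ∧ S ⊆ I}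

/-- The congruence relation associated to an ideal `I`:
`x ≡_I y` iff `(x ⊖ y) ⊕ (y ⊖ x) ∈ I`. -/
def relI (I : Set A) (x y : A) : Prop :=
  MValg.add (MValg.sub x y) (MValg.sub y x) ∈ I

/-- A congruence on an MVW-rig: an equivalence relation compatible with ⊕, ¬ and ·. -/
def IsCongruence (r : A → A → Prop) : Prop :=
  Equivalence r ∧
  (∀ a b c d : A, r a b → r c d → r (MValg.add a c) (MValg.add b d)) ∧
  (∀ a b : A, r a b → r (MValg.neg a) (MValg.neg b)) ∧
  (∀ a b c d : A, r a b → r c d → r (mul a c) (mul b d))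

/-- Homomorphisms of MVW-rigs. -/
def IsHom {A B : Type*} [MVWrig A] [MVWrig B] (f : A → B) : Prop :=
  f MValg.zero = MValg.zero ∧
  (∀ x y : A, f (MValg.add x y) = MValg.add (f x) (f y)) ∧
  (∀ x : A, f (MValg.neg x) = MValg.neg (f x)) ∧
  (∀ x y : A, f (mul x y) = mul (f x) (f y))

end MVWrig

/-- The prime spectrum of an MVW-rig: the set of its prime ideals. -/
abbrev MVSpec (A : Type*) [MVWrig A] := {P : Set A // MVWrig.IsPrimeIdeal P}

/-- Basic sets `V(a) = {P ∈ Spec A | a ∈ P}` of the co-Zariski topology. -/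
def Vset {A : Type*} [MVWrig A] (a : A) : Set (MVSpec A) := {P : MVSpec A | a ∈ P.val}

/-- The co-Zariski topology on the prime spectrum, generated by the base `{V(a) : a ∈ A}`. -/
instance {A : Type*} [MVWrig A] : TopologicalSpace (MVSpec A) :=
  TopologicalSpace.generateFrom {s : Set (MVSpec A) | ∃ a : A, s = Vset a}


namespace MValg

variable {A : Type*} [MValg A]

theorem zero_add' (x : A) : add zero x = x := by rw [add_comm]; exact MValg.add_zero x

theorem neg_add_self' (x : A) : add (neg x) x = neg zero := by
  have h := mv6 x (neg zero)
  simp only [add_neg_zero, neg_neg, zero_add'] at h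
  exact h.symm

theorem le_refl' (x : A) : le x x := by
  show neg (add (neg x) x) = zero
  rw [neg_add_self', neg_neg]

theorem le_add_right' (x b : A) : le x (add x b) := by
  show neg (add (neg x) (add x b)) = zero
  rw [add_assoc, neg_add_self', add_comm, add_neg_zero, neg_neg]

theorem eq_add_of_le' {x y : A} (h : le x y) : y = add x (sub y x) := by
  have h6 : add (sub x y) y = add (sub y x) x := mv6 x y
  rw [h, zero_add'] at h6
  exact h6.trans (add_comm _ _)

theorem le_trans' {x y z : A} (hxy : le x y) (hyz : le y z) : le x z := by
  have e1 := eq_add_of_le' hxy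
  have e2 := eq_add_of_le' hyz
  have e3 : z = add x (add (sub y x) (sub z y)) := by
    rw [add_assoc, ← e1]; exact e2
  rw [e3]; exact le_add_right' _ _

theorem add_le_add_right' {x y : A} (h : le x y) (c : A) : le (add x c) (add y c) := by
  have e := eq_add_of_le' h
  have e2 : add (add x (sub y x)) c = add (add x c) (sub y x) := by
    rw [← add_assoc, add_comm (sub y x) c, add_assoc]
  rw [e, e2]
  exact le_add_right' _ _

theorem add_le_add_left' {x y : A} (h : le x y) (c : A) : le (add c x) (add c y) := by
  rw [add_comm c x, add_comm c y]; exact add_le_add_right' h c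

theorem add_le_add' {x y z w : A} (h1 : le x y) (h2 : le z w) :
    le (add x z) (add y w) :=
  le_trans' (add_le_add_right' h1 z) (add_le_add_left' h2 y)

theorem eq_zero_of_le_zero' {x : A} (h : le x zero) : x = zero := by
  have hx : sub x zero = x := by
    show neg (add (neg x) zero) = x
    rw [MValg.add_zero, neg_neg]
  have h' : sub x zero = zero := h
  rw [hx] at h'
  exact h'

theorem add_add_add_comm' (a b c d : A) :
    add (add a b) (add c d) = add (add a c) (add b d) := by
  rw [← add_assoc a b (add c d), add_assoc b c d, add_comm b c,
    ← add_assoc c b d, add_assoc a c (add b d)]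

end MValg

namespace MVWrig

variable {A : Type*} [MVWrig A]

open MValg

theorem mul_le_mul_right' {a b : A} (h : le a b) (c : A) :
    le (mul a c) (mul b c) := by
  have hs := sub_mul_ge c a b
  rw [h, MVWrig.zero_mul] at hs
  exact eq_zero_of_le_zero' hs

theorem mul_le_mul_left' {a b : A} (h : le a b) (c : A) :
    le (mul c a) (mul c b) := by
  have hs := mul_sub_ge c a b
  rw [h, MVWrig.mul_zero] at hs
  exact eq_zero_of_le_zero' hs

/-- Sum of a list of elements. -/
def sumList : List A → A
  | [] => MValg.zero
  | t :: l => MValg.add t (sumList l)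

theorem sumList_append (l1 l2 : List A) :
    sumList (l1 ++ l2) = MValg.add (sumList l1) (sumList l2) := by
  induction l1 with
  | nil => simp [sumList, zero_add']
  | cons t l ih => simp [sumList, ih, MValg.add_assoc]

theorem sumList_mem_ideal {I : Set A} (hI : IsIdeal I) :
    ∀ l : List A, (∀ t ∈ l, t ∈ I) → sumList l ∈ I := by
  intro l
  induction l with
  | nil => intro _; exact hI.1
  | cons t l ih =>
    intro h
    exact hI.2.2.1 t (sumList l) (h t List.mem_cons_self)
      (ih fun x hx => h x (List.mem_cons_of_mem t hx))

theorem sumList_mul_le (l : List A) (z : A) :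
    le (mul (sumList l) z) (sumList (l.map (fun t => mul t z))) := by
  induction l with
  | nil =>
    show le (mul MValg.zero z) MValg.zero
    rw [MVWrig.zero_mul]; exact le_refl' _
  | cons t l ih =>
    show le (mul (MValg.add t (sumList l)) z)
      (MValg.add (mul t z) (sumList (l.map (fun t => mul t z))))
    exact le_trans' (add_mul_le z t (sumList l)) (add_le_add' (le_refl' _) ih)

end MVWrig


namespace MVWrig

variable {A : Type*} [MVWrig A]

open MValg

theorem exists_prime_disjoint
    (hcomm : ∀ x y : A, mul x y = mul y x)
    (one : A) (hone : ∀ x : A, mul one x = x ∧ mul x one = x)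
    (M : Set A) (hM : ∀ x ∈ M, ∀ y ∈ M, mul x y ∈ M) (h0 : MValg.zero ∉ M) :
    ∃ P : Set A, IsPrimeIdeal P ∧ ∀ x ∈ P, x ∉ M := by
  set C : Set (Set A) := {I | IsIdeal I ∧ ∀ x ∈ I, x ∉ M} with hCdef
  have hZ : ({MValg.zero} : Set A) ∈ C := by
    constructor
    · refine ⟨rfl, ?_, ?_, ?_⟩
      · intro a b hab hb
        rw [Set.mem_singleton_iff] at hb ⊢
        rw [hb] at hab
        exact eq_zero_of_le_zero' hab
      · intro a b ha hb
        rw [Set.mem_singleton_iff] at ha hb ⊢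
        rw [ha, hb, MValg.add_zero]
      · intro a b ha
        rw [Set.mem_singleton_iff] at ha
        rw [ha]
        constructor
        · rw [Set.mem_singleton_iff, MVWrig.zero_mul]
        · rw [Set.mem_singleton_iff, MVWrig.mul_zero]
    · intro x hx
      rw [Set.mem_singleton_iff] at hx
      rw [hx]; exact h0
  obtain ⟨m, -, hmax⟩ := zorn_subset_nonempty C (fun c hcC hchain hcne => by
    refine ⟨⋃₀ c, ⟨⟨?_, ?_, ?_, ?_⟩, ?_⟩, fun s hs => Set.subset_sUnion_of_mem hs⟩
    · obtain ⟨I0, hI0⟩ := hcne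
      exact Set.mem_sUnion.2 ⟨I0, hI0, (hcC hI0).1.1⟩
    · rintro a b hab hb
      obtain ⟨I, hIc, hbI⟩ := Set.mem_sUnion.1 hb
      exact Set.mem_sUnion.2 ⟨I, hIc, (hcC hIc).1.2.1 a b hab hbI⟩
    · rintro a b ha hb
      obtain ⟨I, hIc, haI⟩ := Set.mem_sUnion.1 ha
      obtain ⟨J, hJc, hbJ⟩ := Set.mem_sUnion.1 hb
      rcases hchain.total hIc hJc with h | h
      · exact Set.mem_sUnion.2 ⟨J, hJc, (hcC hJc).1.2.2.1 a b (h haI) hbJ⟩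
      · exact Set.mem_sUnion.2 ⟨I, hIc, (hcC hIc).1.2.2.1 a b haI (h hbJ)⟩
    · rintro a b ha
      obtain ⟨I, hIc, haI⟩ := Set.mem_sUnion.1 ha
      exact ⟨Set.mem_sUnion.2 ⟨I, hIc, ((hcC hIc).1.2.2.2 a b haI).1⟩,
        Set.mem_sUnion.2 ⟨I, hIc, ((hcC hIc).1.2.2.2 a b haI).2⟩⟩
    · rintro x hx
      obtain ⟨I, hIc, hxI⟩ := Set.mem_sUnion.1 hx
      exact (hcC hIc).2 x hxI) {MValg.zero} hZ
  have hmI : IsIdeal m := hmax.1.1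
  have hmM : ∀ x ∈ m, x ∉ M := hmax.1.2
  have key : ∀ a : A, a ∉ m → ∃ m1 ∈ M, ∃ i ∈ m, ∃ l : List A,
      (∀ t ∈ l, ∃ c, t = mul c a) ∧ MValg.le m1 (MValg.add i (sumList l)) := by
    intro a ha
    set J : Set A := {x | ∃ i ∈ m, ∃ l : List A,
      (∀ t ∈ l, ∃ c, t = mul c a) ∧ MValg.le x (MValg.add i (sumList l))} with hJdef
    have hmJ : m ⊆ J := by
      intro i hi
      refine ⟨i, hi, [], fun t ht => absurd ht List.not_mem_nil, ?_⟩
      show MValg.le i (MValg.add i MValg.zero)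
      rw [MValg.add_zero]; exact le_refl' i
    have haJ : a ∈ J := by
      refine ⟨MValg.zero, hmI.1, [a], ?_, ?_⟩
      · intro t ht
        rw [List.mem_singleton] at ht
        exact ⟨one, ht.trans (hone a).1.symm⟩
      · show MValg.le a (MValg.add MValg.zero (MValg.add a MValg.zero))
        rw [MValg.add_zero, zero_add']; exact le_refl' a
    have hJideal : IsIdeal J := by
      refine ⟨?_, ?_, ?_, ?_⟩
      · refine ⟨MValg.zero, hmI.1, [], fun t ht => absurd ht List.not_mem_nil, ?_⟩
        show MValg.le MValg.zero (MValg.add MValg.zero MValg.zero)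
        rw [MValg.add_zero]; exact le_refl' _
      · rintro x y hxy ⟨i, him, l, hl, hle⟩
        exact ⟨i, him, l, hl, le_trans' hxy hle⟩
      · rintro x y ⟨i1, h1, l1, hl1, hle1⟩ ⟨i2, h2, l2, hl2, hle2⟩
        refine ⟨MValg.add i1 i2, hmI.2.2.1 _ _ h1 h2, l1 ++ l2, ?_, ?_⟩
        · intro t ht
          rcases List.mem_append.1 ht with h | h
          · exact hl1 t h
          · exact hl2 t h
        · have hb := add_le_add' hle1 hle2
          rw [MValg.add_add_add_comm', ← sumList_append] at hb
          exact hb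
      · rintro x b ⟨i, him, l, hl, hle⟩
        have hxb : mul x b ∈ J := by
          refine ⟨mul i b, (hmI.2.2.2 i b him).1, l.map (fun t => mul t b), ?_, ?_⟩
          · intro t ht
            rw [List.mem_map] at ht
            obtain ⟨t0, ht0, rfl⟩ := ht
            obtain ⟨c, rfl⟩ := hl t0 ht0
            refine ⟨mul c b, ?_⟩
            rw [MVWrig.mul_assoc c a b, hcomm a b, ← MVWrig.mul_assoc c b a]
          · have h1 : MValg.le (mul x b) (mul (MValg.add i (sumList l)) b) :=
              mul_le_mul_right' hle b
            have h2 := add_mul_le b i (sumList l)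
            have h3 := add_le_add' (le_refl' (mul i b)) (sumList_mul_le l b)
            exact le_trans' h1 (le_trans' h2 h3)
        refine ⟨hxb, ?_⟩
        rw [hcomm b x]; exact hxb
    have hnd : ¬ (∀ x ∈ J, x ∉ M) := by
      intro hdisj
      have hJC : J ∈ C := ⟨hJideal, hdisj⟩
      exact ha ((hmax.2 hJC hmJ) haJ)
    push_neg at hnd
    obtain ⟨x, hxJ, hxM⟩ := hnd
    obtain ⟨i, him, l, hl, hle⟩ := hxJ
    exact ⟨x, hxM, i, him, l, hl, hle⟩
  have hprime : ∀ a b : A, mul a b ∈ m → a ∈ m ∨ b ∈ m := by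
    intro a b hab
    by_contra hcon
    push_neg at hcon
    obtain ⟨m1, hm1M, i1, hi1, l1, hl1, hle1⟩ := key a hcon.1
    obtain ⟨m2, hm2M, i2, hi2, l2, hl2, hle2⟩ := key b hcon.2
    have habm : ∀ z : A, mul z (mul a b) ∈ m := fun z => (hmI.2.2.2 _ z hab).2
    have hterm : ∀ t1 ∈ l1, mul t1 (sumList l2) ∈ m := by
      intro t1 ht1
      obtain ⟨c, rfl⟩ := hl1 t1 ht1
      have hmap : ∀ u ∈ l2.map (fun t => mul t (mul c a)), u ∈ m := by
        intro u hu
        rw [List.mem_map] at hu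
        obtain ⟨t2, ht2, rfl⟩ := hu
        obtain ⟨d, rfl⟩ := hl2 t2 ht2
        have e : mul (mul d b) (mul c a) = mul (mul d c) (mul a b) := by
          rw [MVWrig.mul_assoc d b (mul c a), hcomm b (mul c a), MVWrig.mul_assoc c a b,
            ← MVWrig.mul_assoc d c (mul a b)]
        rw [e]; exact habm (mul d c)
      have hin : mul (sumList l2) (mul c a) ∈ m :=
        hmI.2.1 _ _ (sumList_mul_le l2 (mul c a)) (sumList_mem_ideal hmI _ hmap)
      rw [hcomm (mul c a) (sumList l2)]
      exact hin
    have hs1s2 : mul (sumList l1) (sumList l2) ∈ m := by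
      have hmap : ∀ u ∈ l1.map (fun t => mul t (sumList l2)), u ∈ m := by
        intro u hu
        rw [List.mem_map] at hu
        obtain ⟨t1, ht1, rfl⟩ := hu
        exact hterm t1 ht1
      exact hmI.2.1 _ _ (sumList_mul_le l1 (sumList l2)) (sumList_mem_ideal hmI _ hmap)
    have hb1 : MValg.le (mul m1 m2)
        (mul (MValg.add i1 (sumList l1)) (MValg.add i2 (sumList l2))) :=
      le_trans' (mul_le_mul_right' hle1 m2) (mul_le_mul_left' hle2 _)
    have hb2 := add_mul_le (MValg.add i2 (sumList l2)) i1 (sumList l1)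
    have hY1 : mul i1 (MValg.add i2 (sumList l2)) ∈ m := (hmI.2.2.2 i1 _ hi1).1
    have hY2 : mul (sumList l1) (MValg.add i2 (sumList l2)) ∈ m := by
      have hb3 := mul_add_le (sumList l1) i2 (sumList l2)
      have hi2' : mul (sumList l1) i2 ∈ m := (hmI.2.2.2 i2 (sumList l1) hi2).2
      exact hmI.2.1 _ _ hb3 (hmI.2.2.1 _ _ hi2' hs1s2)
    have hmem : mul m1 m2 ∈ m :=
      hmI.2.1 _ _ (le_trans' hb1 hb2) (hmI.2.2.1 _ _ hY1 hY2)
    exact hmM _ hmem (hM m1 hm1M m2 hm2M)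
  exact ⟨m, ⟨hmI, hprime⟩, hmM⟩

/-- Product of a list, with `one` for the empty list. -/
def prodList (one : A) : List A → A
  | [] => one
  | t :: l => mul t (prodList one l)

theorem prodList_append (one : A) (hone : ∀ x : A, mul one x = x ∧ mul x one = x)
    (l1 l2 : List A) :
    prodList one (l1 ++ l2) = mul (prodList one l1) (prodList one l2) := by
  induction l1 with
  | nil => simp [prodList, (hone _).1]
  | cons t l ih => simp [prodList, ih, MVWrig.mul_assoc]

theorem prodList_mem_prime {P : Set A} (hP : IsPrimeIdeal P)
    (one : A) (hone : ∀ x : A, mul one x = x ∧ mul x one = x) :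
    ∀ l : List A, l ≠ [] → prodList one l ∈ P → ∃ t ∈ l, t ∈ P := by
  have aux : ∀ l : List A, prodList one l ∈ P → one ∈ P ∨ ∃ t ∈ l, t ∈ P := by
    intro l
    induction l with
    | nil => intro h; exact Or.inl h
    | cons t l ih =>
      intro h
      rcases hP.2 t (prodList one l) h with h' | h'
      · exact Or.inr ⟨t, List.mem_cons_self, h'⟩
      · rcases ih h' with h'' | ⟨u, hu, huP⟩
        · exact Or.inl h''
        · exact Or.inr ⟨u, List.mem_cons_of_mem t hu, huP⟩
  intro l hne hmem
  rcases aux l hmem with h | h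
  · rcases l with _ | ⟨t, l'⟩
    · exact absurd rfl hne
    · have ht : t ∈ P := by
        have h2 := (hP.1.2.2.2 one t h).2
        rw [(hone t).2] at h2
        exact h2
      exact ⟨t, List.mem_cons_self, ht⟩
  · exact h

theorem exists_list_prodList_zero
    (hcomm : ∀ x y : A, mul x y = mul y x)
    (one : A) (hone : ∀ x : A, mul one x = x ∧ mul x one = x)
    (S : Set A)
    (hcov : ∀ P : Set A, IsPrimeIdeal P → ∃ a ∈ S, a ∈ P) :
    ∃ l : List A, l ≠ [] ∧ (∀ t ∈ l, t ∈ S) ∧ prodList one l = MValg.zero := by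
  by_contra hcon
  push_neg at hcon
  set M : Set A := {x | ∃ l : List A, l ≠ [] ∧ (∀ t ∈ l, t ∈ S) ∧ x = prodList one l}
    with hMdef
  have hMmul : ∀ x ∈ M, ∀ y ∈ M, mul x y ∈ M := by
    rintro x ⟨l1, h1, hs1, rfl⟩ y ⟨l2, h2, hs2, rfl⟩
    refine ⟨l1 ++ l2, ?_, ?_, (prodList_append one hone l1 l2).symm⟩
    · simp [h1]
    · intro t ht
      rcases List.mem_append.1 ht with h | h
      · exact hs1 t h
      · exact hs2 t h
  have h0 : MValg.zero ∉ M := by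
    rintro ⟨l, h1, h2, h3⟩
    exact hcon l h1 h2 h3.symm
  obtain ⟨P, hP, hdisj⟩ := exists_prime_disjoint hcomm one hone M hMmul h0
  obtain ⟨a, haS, haP⟩ := hcov P hP
  have haM : a ∈ M := ⟨[a], by simp, by simpa using haS, by simp [prodList, (hone a).2]⟩
  exact hdisj a haP haM

end MVWrig

/-- For a commutative MVW-rig with unitary element, the spectrum with the co-Zariski
topology is a compact topological space. -/
theorem stmt_19 {A : Type*} [MVWrig A]
    (hcomm : ∀ x y : A, MVWrig.mul x y = MVWrig.mul y x)
    (one : A) (hone : ∀ x : A, MVWrig.mul one x = x ∧ MVWrig.mul x one = x) :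
    CompactSpace (MVSpec A) := by
  have hbasis : TopologicalSpace.IsTopologicalBasis
      {s : Set (MVSpec A) | ∃ a : A, s = Vset a} := by
    refine ⟨?_, ?_, rfl⟩
    · rintro t1 ⟨a, rfl⟩ t2 ⟨b, rfl⟩ P hP
      refine ⟨Vset (MValg.add a b), ⟨MValg.add a b, rfl⟩, ?_, ?_⟩
      · exact P.2.1.2.2.1 a b hP.1 hP.2
      · rintro Q hQ
        refine ⟨?_, ?_⟩
        · exact Q.2.1.2.1 a (MValg.add a b) (MValg.le_add_right' a b) hQ
        · refine Q.2.1.2.1 b (MValg.add a b) ?_ hQ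
          have h := MValg.le_add_right' b a
          rw [MValg.add_comm b a] at h
          exact h
    · apply Set.eq_univ_of_forall
      intro P
      exact Set.mem_sUnion.2 ⟨Vset MValg.zero, ⟨MValg.zero, rfl⟩, P.2.1.1⟩
  constructor
  apply isCompact_of_finite_subcover
  intro ι U hUo hcover
  classical
  set S : Set A := {a : A | ∃ i : ι, Vset a ⊆ U i} with hSdef
  have hcov : ∀ P : Set A, MVWrig.IsPrimeIdeal P → ∃ a ∈ S, a ∈ P := by
    intro P hP
    have hmem : (⟨P, hP⟩ : MVSpec A) ∈ ⋃ i, U i := hcover (Set.mem_univ _)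
    rw [Set.mem_iUnion] at hmem
    obtain ⟨i, hi⟩ := hmem
    obtain ⟨v, ⟨a, rfl⟩, hPv, hvU⟩ := hbasis.exists_subset_of_mem_open hi (hUo i)
    exact ⟨a, ⟨i, hvU⟩, hPv⟩
  obtain ⟨l, hlne, hlS, hlzero⟩ :=
    MVWrig.exists_list_prodList_zero hcomm one hone S hcov
  haveI hιne : Nonempty ι := by
    obtain ⟨t, ht⟩ := List.exists_mem_of_ne_nil l hlne
    obtain ⟨i, -⟩ := hlS t ht
    exact ⟨i⟩
  have hchoice : ∀ t : A, ∃ i : ι, t ∈ l → Vset t ⊆ U i := by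
    intro t
    by_cases ht : t ∈ l
    · obtain ⟨i, hi⟩ := hlS t ht
      exact ⟨i, fun _ => hi⟩
    · exact ⟨Classical.arbitrary ι, fun h => absurd h ht⟩
  choose g hg using hchoice
  refine ⟨(l.map g).toFinset, ?_⟩
  intro P _
  have hzP : MVWrig.prodList one l ∈ P.1 := by rw [hlzero]; exact P.2.1.1
  obtain ⟨t, htl, htP⟩ := MVWrig.prodList_mem_prime P.2 one hone l hlne hzP
  simp only [Set.mem_iUnion]
  exact ⟨g t, by rw [List.mem_toFinset]; exact List.mem_map_of_mem htl, hg t htl htP⟩
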